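/- Let G be a finite simple connected graph, u ∈ V(G), and (T_G, u') the stable-path tree of G rooted at u (with respect to a fixed total order on V(G)). Then ℓ_G : V(T_G) → V(G) is a surjective graph homomorphism, i.e., it is surjective and maps adjacent vertices of T_G to adjacent vertices of G. -/

import Mathlib

/-- The set of vertices reachable from `w` by walks of `G` staying inside `B`
(the connected component of `w` in the induced subgraph `G[B]`). -/
def compIn {V : Type*} (G : SimpleGraph V) (B : Set V) (w : V) : Set V :=
  {y | ∃ p : G.Walk w y, ∀ z ∈ p.support, z ∈ B}

/-- Given the available vertex set `B`, the current vertex `x` and a chosen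
neighbour `w`, the vertex set of the connected component `G_i` of
`G[B] − ({x} ∪ {smaller neighbours of x})` containing `w`. -/
def nextSet {V : Type*} [LinearOrder V] (G : SimpleGraph V) (B : Set V) (x w : V) :
    Set V :=
  compIn G (B \ ({x} ∪ {z ∈ B | G.Adj x z ∧ z < w})) w

/-- `sptFrom G B x rest` says that `rest` is a valid continuation of a stable path
currently ending at `x`, with available vertex set `B`. -/
def sptFrom {V : Type*} [LinearOrder V] (G : SimpleGraph V) :
    Set V → V → List V → Prop
  | _, _, [] => True
  | B, x, w :: rest => G.Adj x w ∧ w ∈ B ∧ sptFrom G (nextSet G B x w) w rest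

/-- `p` is a stable path of `G` starting at `u`. -/
def StablePath {V : Type*} [LinearOrder V] (G : SimpleGraph V) (u : V)
    (p : List V) : Prop :=
  ∃ rest, p = u :: rest ∧ sptFrom G Set.univ u rest

/-- The vertex set of the stable-path tree `T_G` rooted at `u`: stable paths
starting at `u` (all of which have pairwise distinct entries). -/
def SPVert {V : Type*} [LinearOrder V] (G : SimpleGraph V) (u : V) :=
  {p : List V // p.Nodup ∧ StablePath G u p}

noncomputable instance {V : Type*} [Fintype V] [DecidableEq V] [LinearOrder V]
    (G : SimpleGraph V) (u : V) : Fintype (SPVert G u) :=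
  Fintype.ofInjective (fun p => (⟨p.1, p.2.1⟩ : {l : List V // l.Nodup}))
    (by rintro ⟨a, ha⟩ ⟨b, hb⟩ h; exact Subtype.ext (by simpa [Subtype.ext_iff] using h))

/-- The stable-path tree `T_G` of `G` rooted at `u`: a stable path is joined to
each of its one-step extensions. -/
def SPT {V : Type*} [LinearOrder V] (G : SimpleGraph V) (u : V) :
    SimpleGraph (SPVert G u) :=
  SimpleGraph.fromRel (fun p q => q.1.length = p.1.length + 1 ∧ p.1 <+: q.1)

/-- The root `u'` of the stable-path tree. -/
def SPTroot {V : Type*} [LinearOrder V] (G : SimpleGraph V) (u : V) : SPVert G u :=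
  ⟨[u], by simp, ⟨[], rfl, trivial⟩⟩

/-- The labeling map `ℓ_G : V(T_G) → V(G)` sending a stable path to its last vertex. -/
def SPTlabel {V : Type*} [LinearOrder V] {G : SimpleGraph V} {u : V}
    (p : SPVert G u) : V :=
  p.1.getLast (by obtain ⟨-, rest, h, -⟩ := p.2; simp [h])

/-!
Every step of a stable path goes along an edge of `G`, so the label of a child in `T_G` is adjacent
to the label of its parent. For surjectivity, let `y` be reachable from `x` inside the available
set `B`, with `y ≠ x`. Among the neighbours `w` of `x` from which `y` is reachable inside
`B \ {x}`, take the least one: no smaller neighbour of `x` can lie on a walk from `w` to `y` inside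
`B \ {x}` (its tail would contradict minimality), so `y` is in the component `G_i` of `w`. This
component is strictly smaller than `B`, and induction on `|B|` finishes the argument.
-/

open SimpleGraph

section compIn

variable {V : Type*} {G : SimpleGraph V} {B : Set V} {x y : V}

lemma compIn_subset : compIn G B x ⊆ B := fun _ ⟨p, hp⟩ => hp _ p.end_mem_support

lemma mem_of_mem_compIn (hy : y ∈ compIn G B x) : x ∈ B :=
  let ⟨p, hp⟩ := hy
  hp x p.start_mem_support

lemma mem_compIn_compIn (hy : y ∈ compIn G B x) : y ∈ compIn G (compIn G B x) x :=
  let ⟨p, hp⟩ := hy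
  ⟨p, fun z hz => by
    classical
    exact ⟨p.takeUntil z hz, fun a ha => hp a (p.support_takeUntil_subset_support hz ha)⟩⟩

lemma exists_adj_mem_compIn_diff_singleton (hy : y ∈ compIn G B x) (hyx : y ≠ x) :
    ∃ w, G.Adj x w ∧ w ∈ B ∧ y ∈ compIn G (B \ {x}) w := by
  classical
  obtain ⟨p, hp⟩ := hy
  have hpB : ∀ z ∈ p.bypass.support, z ∈ B := fun z hz => hp z (p.support_bypass_subset_support hz)
  have hpath := p.bypass_isPath
  cases hq : p.bypass with
  | nil => exact absurd rfl hyx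
  | cons hxw q =>
    rw [hq] at hpB hpath
    have hx : x ∉ q.support := ((Walk.cons_isPath_iff hxw q).1 hpath).2
    refine ⟨_, hxw, hpB _ (by simp), q, fun z hz => ⟨hpB z (by simp [hz]), ?_⟩⟩
    rintro rfl
    exact hx hz

end compIn

section StablePath

variable {V : Type*} [LinearOrder V] {G : SimpleGraph V}

lemma nextSet_subset {B : Set V} {x w : V} : nextSet G B x w ⊆ B \ {x} :=
  fun _ hy => ⟨(compIn_subset hy).1, fun hx => (compIn_subset hy).2 (Or.inl hx)⟩

lemma exists_adj_mem_nextSet {B : Set V} {x y : V} (hB : B.Finite) (hy : y ∈ compIn G B x)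
    (hyx : y ≠ x) : ∃ w, G.Adj x w ∧ w ∈ B ∧ y ∈ nextSet G B x w := by
  classical
  set S := {w | G.Adj x w ∧ w ∈ B ∧ y ∈ compIn G (B \ {x}) w}
  obtain ⟨w, ⟨hxw, hwB, q, hq⟩, hmin⟩ := S.exists_min_image id
    (hB.subset fun _ hw => hw.2.1) (exists_adj_mem_compIn_diff_singleton hy hyx)
  refine ⟨w, hxw, hwB, q, fun z hz => ⟨(hq z hz).1, ?_⟩⟩
  rintro (hzx | ⟨hzB, hxz, hzw⟩)
  · exact (hq z hz).2 hzx
  · have hzS : z ∈ S := ⟨hxz, hzB, q.dropUntil z hz,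
      fun a ha => hq a (q.support_dropUntil_subset_support hz ha)⟩
    exact (hmin z hzS).not_gt hzw

lemma sptFrom_mem : ∀ {rest : List V} {B : Set V} {x : V}, sptFrom G B x rest →
    ∀ z ∈ rest, z ∈ B \ {x}
  | [], _, _, _ => by simp
  | w :: r, _, x, ⟨hxw, hwB, hr⟩ => by
    rintro z (_ | ⟨_, hz⟩)
    · exact ⟨hwB, hxw.ne'⟩
    · exact nextSet_subset (sptFrom_mem hr z hz).1

lemma sptFrom_nodup : ∀ {rest : List V} {B : Set V} {x : V}, sptFrom G B x rest →
    (x :: rest).Nodup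
  | [], _, _, _ => by simp
  | _ :: _, _, x, h => List.nodup_cons.2 ⟨fun hx => (sptFrom_mem h x hx).2 rfl, sptFrom_nodup h.2.2⟩

lemma adj_getLast_of_sptFrom_append : ∀ {r : List V} {B : Set V} {x w : V},
    sptFrom G B x (r ++ [w]) → G.Adj ((x :: r).getLast (List.cons_ne_nil x r)) w
  | [], _, _, _, h => h.1
  | _ :: _, _, _, _, h => by
    rw [List.getLast_cons (List.cons_ne_nil _ _)]
    exact adj_getLast_of_sptFrom_append h.2.2

lemma exists_sptFrom_getLast_eq {B : Set V} (hB : B.Finite) {x y : V}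
    (hy : y ∈ compIn G B x) :
    ∃ rest, sptFrom G B x rest ∧ (x :: rest).getLast (List.cons_ne_nil x rest) = y := by
  rcases eq_or_ne y x with rfl | hyx
  · exact ⟨[], trivial, rfl⟩
  obtain ⟨w, hxw, hwB, hyN⟩ := exists_adj_mem_nextSet hB hy hyx
  obtain ⟨rest, hrest, hlast⟩ :=
    exists_sptFrom_getLast_eq (hB.subset (nextSet_subset.trans Set.sdiff_subset))
      (mem_compIn_compIn hyN)
  exact ⟨w :: rest, ⟨hxw, hwB, hrest⟩, by rwa [List.getLast_cons (List.cons_ne_nil _ _)]⟩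
termination_by B.ncard
decreasing_by
  exact (Set.ncard_le_ncard nextSet_subset hB.sdiff).trans_lt
    (Set.ncard_sdiff_singleton_lt_of_mem (mem_of_mem_compIn hy) hB)

lemma SPTlabel_surjective [Finite V] (hG : G.Connected) (u : V) :
    Function.Surjective (SPTlabel : SPVert G u → V) := fun y =>
  have hy : y ∈ compIn G Set.univ u := ⟨(hG.preconnected u y).some, fun _ _ => trivial⟩
  let ⟨rest, hrest, hlast⟩ := exists_sptFrom_getLast_eq Set.finite_univ hy
  ⟨⟨u :: rest, sptFrom_nodup hrest, rest, rfl, hrest⟩, hlast⟩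

lemma SPTlabel_eq_getLast {u : V} {p : SPVert G u} {l : List V} (hp : p.1 = l) (hl : l ≠ []) :
    SPTlabel p = l.getLast hl := by
  subst hp
  rfl

lemma adj_SPTlabel_of_isPrefix {u : V} {p q : SPVert G u}
    (hlen : q.1.length = p.1.length + 1) (hpq : p.1 <+: q.1) :
    G.Adj (SPTlabel p) (SPTlabel q) := by
  obtain ⟨t, ht⟩ := hpq
  obtain ⟨w, rfl⟩ : ∃ w, t = [w] :=
    List.length_eq_one_iff.1 (by simpa [← ht] using hlen)
  obtain ⟨restp, hp, -⟩ := p.2.2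
  obtain ⟨restq, hq, hrestq⟩ := q.2.2
  obtain rfl : restq = restp ++ [w] := by simpa [hp, hq] using ht.symm
  rw [SPTlabel_eq_getLast hp (List.cons_ne_nil _ _), SPTlabel_eq_getLast hq (List.cons_ne_nil _ _)]
  simpa using adj_getLast_of_sptFrom_append hrestq

end StablePath

/-- The labeling  of the stable-path tree is a surjective graph homomorphism. -/
theorem stmt_17 {V : Type*} [Fintype V] [LinearOrder V] (G : SimpleGraph V)
    (hG : G.Connected) (u : V) :
    Function.Surjective (SPTlabel : SPVert G u → V) ∧
    ∀ p q : SPVert G u, (SPT G u).Adj p q → G.Adj (SPTlabel p) (SPTlabel q) := by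
  refine ⟨SPTlabel_surjective hG u, fun p q hpq => ?_⟩
  obtain ⟨-, ⟨hlen, hpre⟩ | ⟨hlen, hpre⟩⟩ := (fromRel_adj _ _ _).1 hpq
  · exact adj_SPTlabel_of_isPrefix hlen hpre
  · exact (adj_SPTlabel_of_isPrefix hlen hpre).symm
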